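/- Let G be a short dicotic game. Then G ≽ 0 (mod D⁻) if and only if o(G) ≥ N (i.e., Left moving first wins G under misère play) and for every right option G^R of G there is a left option G^{RL} of G^R with G^{RL} ≽ 0 (mod D⁻). -/

import Mathlib

universe u

namespace SetTheory

inductive PGame : Type (u + 1)
  | mk : ∀ α β : Type u, (α → PGame) → (β → PGame) → PGame

namespace PGame

def LeftMoves : PGame → Type u
  | mk l _ _ _ => l

def RightMoves : PGame → Type u
  | mk _ r _ _ => r

def moveLeft : ∀ g : PGame, LeftMoves g → PGame
  | mk _l _ L _ => L

def moveRight : ∀ g : PGame, RightMoves g → PGame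
  | mk _ _r _ R => R

inductive IsOption : PGame → PGame → Prop
  | moveLeft {x : PGame} (i : x.LeftMoves) : IsOption (x.moveLeft i) x
  | moveRight {x : PGame} (i : x.RightMoves) : IsOption (x.moveRight i) x

noncomputable def birthday : PGame.{u} → Ordinal.{u}
  | ⟨_, _, xL, xR⟩ =>
    max (Ordinal.lsub.{u, u} fun i => birthday (xL i)) (Ordinal.lsub.{u, u} fun i => birthday (xR i))

theorem birthday_moveLeft_lt {x : PGame} (i : x.LeftMoves) :
    (x.moveLeft i).birthday < x.birthday := by
  cases x; rw [birthday]; exact lt_max_of_lt_left (Ordinal.lt_lsub _ i)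

theorem birthday_moveRight_lt {x : PGame} (i : x.RightMoves) :
    (x.moveRight i).birthday < x.birthday := by
  cases x; rw [birthday]; exact lt_max_of_lt_right (Ordinal.lt_lsub _ i)

def Identical : PGame.{u} → PGame.{u} → Prop
  | mk _ _ xL xR, mk _ _ yL yR =>
    Relator.BiTotal (fun i j => Identical (xL i) (yL j)) ∧
      Relator.BiTotal (fun i j => Identical (xR i) (yR j))

instance : Zero PGame :=
  ⟨⟨PEmpty, PEmpty, PEmpty.elim, PEmpty.elim⟩⟩

def star : PGame.{u} :=
  ⟨PUnit, PUnit, fun _ => 0, fun _ => 0⟩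

def neg : PGame → PGame
  | ⟨l, r, L, R⟩ => ⟨r, l, fun i => neg (R i), fun i => neg (L i)⟩

instance : Neg PGame :=
  ⟨neg⟩

noncomputable instance : Add PGame.{u} :=
  ⟨fun x y => by
    induction x generalizing y with | mk xl xr _ _ IHxl IHxr => ?_
    induction y with | mk yl yr yL yR IHyl IHyr => ?_
    have y := mk yl yr yL yR
    refine ⟨xl ⊕ yl, xr ⊕ yr, Sum.rec ?_ ?_, Sum.rec ?_ ?_⟩
    · exact fun i => IHxl i y
    · exact IHyl
    · exact fun i => IHxr i y
    · exact IHyr⟩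

end PGame

end SetTheory

open SetTheory PGame

namespace MisereDicot

def Follower (G' G : PGame) : Prop := Relation.ReflTransGen PGame.IsOption G' G

def IsShort (G : PGame) : Prop :=
  ∀ G', Follower G' G → Finite G'.LeftMoves ∧ Finite G'.RightMoves

def Dicot (G : PGame) : Prop :=
  ∀ G', Follower G' G → (IsEmpty G'.LeftMoves ↔ IsEmpty G'.RightMoves)

mutual
def LeftWinsFirst (G : PGame) : Prop :=
  IsEmpty G.LeftMoves ∨ ∃ i, ¬ RightWinsFirst (G.moveLeft i)
termination_by G.birthday
decreasing_by exact PGame.birthday_moveLeft_lt i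

def RightWinsFirst (G : PGame) : Prop :=
  IsEmpty G.RightMoves ∨ ∃ j, ¬ LeftWinsFirst (G.moveRight j)
termination_by G.birthday
decreasing_by exact PGame.birthday_moveRight_lt j
end

inductive MOutcome : Type
  | L | N | P | R
deriving DecidableEq

instance : LE MOutcome := ⟨fun a b => a = b ∨ a = .R ∨ b = .L⟩

noncomputable def outcome (G : PGame) : MOutcome := by
  classical
  exact if LeftWinsFirst G then (if RightWinsFirst G then .N else .L)
        else (if RightWinsFirst G then .R else .P)

def Dge (G H : PGame) : Prop :=
  ∀ X : PGame, IsShort X → Dicot X → outcome (H + X) ≤ outcome (G + X)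

def Deq (G H : PGame) : Prop :=
  ∀ X : PGame, IsShort X → Dicot X → outcome (G + X) = outcome (H + X)

def Dgt (G H : PGame) : Prop := Dge G H ∧ ¬ Deq G H

def DInvertible (G : PGame) : Prop :=
  ∃ H : PGame, IsShort H ∧ Dicot H ∧ Deq (G + H) 0

/-- The left option `G^L_i` is reversible through its right option `(G^L_i)^R_j ≼ G`. -/
def LeftReversibleAt (G : PGame) (i : G.LeftMoves) (j : (G.moveLeft i).RightMoves) : Prop :=
  Dge G ((G.moveLeft i).moveRight j)

def RightReversibleAt (G : PGame) (j : G.RightMoves) (i : (G.moveRight j).LeftMoves) : Prop :=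
  Dge ((G.moveRight j).moveLeft i) G

/-- `G` has a dominated left option (removable by the Domination theorem). -/
def LeftDominated (G : PGame) : Prop :=
  ∃ i i' : G.LeftMoves, ¬ (G.moveLeft i).Identical (G.moveLeft i') ∧
    Dge (G.moveLeft i') (G.moveLeft i)

def RightDominated (G : PGame) : Prop :=
  ∃ j j' : G.RightMoves, ¬ (G.moveRight j).Identical (G.moveRight j') ∧
    Dge (G.moveRight j) (G.moveRight j')

/-- `G` has a non-atomic reversible left option (bypassable). -/
def LeftNonAtomicReversible (G : PGame) : Prop :=
  ∃ i j, LeftReversibleAt G i j ∧ Nonempty ((G.moveLeft i).moveRight j).LeftMoves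

def RightNonAtomicReversible (G : PGame) : Prop :=
  ∃ j i, RightReversibleAt G j i ∧ Nonempty ((G.moveRight j).moveLeft i).RightMoves

/-- `G` has an atomic-reversible left option to which the atomic-reversibility
replacement applies nontrivially (i.e. changing the set of options): either some
other left option is a winning first move for Left (so the option is removable),
or the option is not already `*`. -/
def LeftAtomicReducible (G : PGame) : Prop :=
  ∃ i j, LeftReversibleAt G i j ∧ IsEmpty ((G.moveLeft i).moveRight j).LeftMoves ∧
    ((∃ i', ¬ (G.moveLeft i').Identical (G.moveLeft i) ∧ ¬ RightWinsFirst (G.moveLeft i')) ∨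
      ¬ (G.moveLeft i).Identical star)

def RightAtomicReducible (G : PGame) : Prop :=
  ∃ j i, RightReversibleAt G j i ∧ IsEmpty ((G.moveRight j).moveLeft i).RightMoves ∧
    ((∃ j', ¬ (G.moveRight j').Identical (G.moveRight j) ∧ ¬ LeftWinsFirst (G.moveRight j')) ∨
      ¬ (G.moveRight j).Identical star)

/-- The Substitution theorem applies to `G`: `G = {A | C}` with `A` an
atomic-reversible left option and `C` an atomic-reversible right option. -/
def SubstitutionReducible (G : PGame) : Prop :=
  (∀ i i' : G.LeftMoves, (G.moveLeft i).Identical (G.moveLeft i')) ∧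
  (∀ j j' : G.RightMoves, (G.moveRight j).Identical (G.moveRight j')) ∧
  (∃ i j, LeftReversibleAt G i j ∧ IsEmpty ((G.moveLeft i).moveRight j).LeftMoves) ∧
  (∃ j i, RightReversibleAt G j i ∧ IsEmpty ((G.moveRight j).moveLeft i).RightMoves)

/-- `G` is in canonical form: no follower admits any of the misère-dicot
simplifications (domination, non-atomic reversibility, atomic reversibility,
substitution) producing an equivalent game with a different set of options. -/
def CanonicalForm (G : PGame) : Prop :=
  ∀ G', Follower G' G →
    ¬ (LeftDominated G' ∨ RightDominated G' ∨
       LeftNonAtomicReversible G' ∨ RightNonAtomicReversible G' ∨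
       LeftAtomicReducible G' ∨ RightAtomicReducible G' ∨
       SubstitutionReducible G')

/-- The game `*2 = {0, * | 0, *}`. -/
def star2 : PGame :=
  PGame.mk Bool Bool (fun b => cond b star 0) (fun b => cond b star 0)

open Classical in
/-- The adjoint `G°` of `G`. -/
noncomputable def adjoint : PGame → PGame
  | PGame.mk l r L R =>
    if IsEmpty l ∧ IsEmpty r then star
    else if IsEmpty l then PGame.mk r PUnit (fun j => adjoint (R j)) (fun _ => 0)
    else if IsEmpty r then PGame.mk PUnit l (fun _ => 0) (fun i => adjoint (L i))
    else PGame.mk r l (fun j => adjoint (R j)) (fun i => adjoint (L i))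

/-- A universe of short games: a class closed under taking options, disjunctive
sums and conjugates. -/
structure GameUniverse where
  mem : PGame → Prop
  short_mem : ∀ G, mem G → IsShort G
  isOption_mem : ∀ G G', mem G → PGame.IsOption G' G → mem G'
  add_mem : ∀ G H, mem G → mem H → mem (G + H)
  neg_mem : ∀ G, mem G → mem (-G)

/-- `G ≽ H` modulo the universe `U`. -/
def UGe (U : GameUniverse) (G H : PGame) : Prop :=
  ∀ X : PGame, U.mem X → outcome (H + X) ≤ outcome (G + X)

/-- `G = H` modulo the universe `U`. -/
def UEq (U : GameUniverse) (G H : PGame) : Prop :=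
  ∀ X : PGame, U.mem X → outcome (G + X) = outcome (H + X)

/-- `G ≻ H` modulo the universe `U`. -/
def UGt (U : GameUniverse) (G H : PGame) : Prop := UGe U G H ∧ ¬ UEq U G H

/-- `J` is invertible in the universe `U`. -/
def UInvertible (U : GameUniverse) (J : PGame) : Prop :=
  ∃ J' : PGame, U.mem J' ∧ UEq U (J + J') 0

end MisereDicot

/-!
Sufficiency is an induction on the test game `X`: in `G + X` Left follows her strategy for `X`
and answers a Right move `G → G^R` by moving to some `G^{RL} ≽ 0`.

Necessity rests on the adjoint: `E + E°` is a `P`-position for every dicot `E`.  If no left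
option of `C = G^R` is `≽ 0`, then `T = {C^{R°} | X_i}` (or `*` when `C = 0`) is a dicot that
Right loses moving first while Left loses `C + T` moving first, so Right wins `G + T` by moving
to `C + T` and `G ⋡ 0`.  Here `X_i` is a dicot that Left wins moving first but loses
`C^{L_i} + X_i`: for `D = C^{L_i} ⋡ 0` take `0` if Left loses `D` moving first, and otherwise
`{T' | D^{L°}}` with `T'` built as above for a right option of `D` none of whose left options
is `≽ 0` (one exists by sufficiency).
-/

namespace SetTheory.PGame

theorem moveRecOn {motive : PGame.{u} → Prop} (x : PGame.{u})
    (IH : ∀ y, (∀ i, motive (y.moveLeft i)) → (∀ j, motive (y.moveRight j)) → motive y) :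
    motive x := by
  induction x with
  | mk α β L R ihl ihr => exact IH _ ihl ihr

instance isEmpty_zero_leftMoves : IsEmpty (LeftMoves 0) :=
  inferInstanceAs (IsEmpty PEmpty)

instance isEmpty_zero_rightMoves : IsEmpty (RightMoves 0) :=
  inferInstanceAs (IsEmpty PEmpty)

instance : Unique star.LeftMoves := PUnit.instUnique

instance : Unique star.RightMoves := PUnit.instUnique

theorem leftMoves_add : ∀ x y : PGame.{u}, (x + y).LeftMoves = (x.LeftMoves ⊕ y.LeftMoves)
  | ⟨_, _, _, _⟩, ⟨_, _, _, _⟩ => rfl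

theorem rightMoves_add : ∀ x y : PGame.{u}, (x + y).RightMoves = (x.RightMoves ⊕ y.RightMoves)
  | ⟨_, _, _, _⟩, ⟨_, _, _, _⟩ => rfl

def toLeftMovesAdd {x y : PGame.{u}} : x.LeftMoves ⊕ y.LeftMoves ≃ (x + y).LeftMoves :=
  Equiv.cast (leftMoves_add x y).symm

def toRightMovesAdd {x y : PGame.{u}} : x.RightMoves ⊕ y.RightMoves ≃ (x + y).RightMoves :=
  Equiv.cast (rightMoves_add x y).symm

@[simp]
theorem add_moveLeft_inl (x : PGame.{u}) {y : PGame.{u}} (i : x.LeftMoves) :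
    (x + y).moveLeft (toLeftMovesAdd (Sum.inl i)) = x.moveLeft i + y := by
  cases x; cases y; rfl

@[simp]
theorem add_moveLeft_inr (x : PGame.{u}) {y : PGame.{u}} (i : y.LeftMoves) :
    (x + y).moveLeft (toLeftMovesAdd (Sum.inr i)) = x + y.moveLeft i := by
  cases x; cases y; rfl

@[simp]
theorem add_moveRight_inl (x : PGame.{u}) {y : PGame.{u}} (i : x.RightMoves) :
    (x + y).moveRight (toRightMovesAdd (Sum.inl i)) = x.moveRight i + y := by
  cases x; cases y; rfl

@[simp]
theorem add_moveRight_inr (x : PGame.{u}) {y : PGame.{u}} (i : y.RightMoves) :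
    (x + y).moveRight (toRightMovesAdd (Sum.inr i)) = x + y.moveRight i := by
  cases x; cases y; rfl

end SetTheory.PGame

namespace MisereDicot

theorem leftWinsFirst_iff {G : PGame} :
    LeftWinsFirst G ↔ IsEmpty G.LeftMoves ∨ ∃ i, ¬ RightWinsFirst (G.moveLeft i) := by
  rw [LeftWinsFirst]

theorem rightWinsFirst_iff {G : PGame} :
    RightWinsFirst G ↔ IsEmpty G.RightMoves ∨ ∃ j, ¬ LeftWinsFirst (G.moveRight j) := by
  rw [RightWinsFirst]

theorem leftWinsFirst_add_iff {G H : PGame} :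
    LeftWinsFirst (G + H) ↔ (IsEmpty G.LeftMoves ∧ IsEmpty H.LeftMoves) ∨
      (∃ i, ¬ RightWinsFirst (G.moveLeft i + H)) ∨ ∃ i, ¬ RightWinsFirst (G + H.moveLeft i) := by
  rw [leftWinsFirst_iff, toLeftMovesAdd.symm.isEmpty_congr, isEmpty_sum,
    toLeftMovesAdd.symm.exists_congr_left, Sum.exists]
  simp only [Equiv.symm_symm, add_moveLeft_inl, add_moveLeft_inr]

theorem rightWinsFirst_add_iff {G H : PGame} :
    RightWinsFirst (G + H) ↔ (IsEmpty G.RightMoves ∧ IsEmpty H.RightMoves) ∨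
      (∃ j, ¬ LeftWinsFirst (G.moveRight j + H)) ∨ ∃ j, ¬ LeftWinsFirst (G + H.moveRight j) := by
  rw [rightWinsFirst_iff, toRightMovesAdd.symm.isEmpty_congr, isEmpty_sum,
    toRightMovesAdd.symm.exists_congr_left, Sum.exists]
  simp only [Equiv.symm_symm, add_moveRight_inl, add_moveRight_inr]

theorem not_rightWinsFirst_iff {G : PGame} :
    ¬ RightWinsFirst G ↔ Nonempty G.RightMoves ∧ ∀ j, LeftWinsFirst (G.moveRight j) := by
  rw [rightWinsFirst_iff, not_or, not_isEmpty_iff, not_exists]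
  simp only [not_not]

theorem leftWinsFirst_of_isEmpty {G : PGame} [IsEmpty G.LeftMoves] : LeftWinsFirst G :=
  leftWinsFirst_iff.mpr (Or.inl ‹_›)

theorem rightWinsFirst_of_isEmpty {G : PGame} [IsEmpty G.RightMoves] : RightWinsFirst G :=
  rightWinsFirst_iff.mpr (Or.inl ‹_›)

theorem leftWinsFirst_add_of_moveLeft_right {G H : PGame} (i : H.LeftMoves)
    (h : ¬ RightWinsFirst (G + H.moveLeft i)) : LeftWinsFirst (G + H) :=
  leftWinsFirst_add_iff.mpr (Or.inr (Or.inr ⟨i, h⟩))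

theorem leftWinsFirst_add_of_moveLeft_left {G H : PGame} (i : G.LeftMoves)
    (h : ¬ RightWinsFirst (G.moveLeft i + H)) : LeftWinsFirst (G + H) :=
  leftWinsFirst_add_iff.mpr (Or.inr (Or.inl ⟨i, h⟩))

theorem rightWinsFirst_add_of_moveRight_left {G H : PGame} (j : G.RightMoves)
    (h : ¬ LeftWinsFirst (G.moveRight j + H)) : RightWinsFirst (G + H) :=
  rightWinsFirst_add_iff.mpr (Or.inr (Or.inl ⟨j, h⟩))

theorem rightWinsFirst_add_of_moveRight_right {G H : PGame} (j : H.RightMoves)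
    (h : ¬ LeftWinsFirst (G + H.moveRight j)) : RightWinsFirst (G + H) :=
  rightWinsFirst_add_iff.mpr (Or.inr (Or.inr ⟨j, h⟩))

theorem not_leftWinsFirst_add {G H : PGame}
    (hne : Nonempty G.LeftMoves ∨ Nonempty H.LeftMoves)
    (hG : ∀ i, RightWinsFirst (G.moveLeft i + H)) (hH : ∀ i, RightWinsFirst (G + H.moveLeft i)) :
    ¬ LeftWinsFirst (G + H) := by
  rw [leftWinsFirst_add_iff]
  rintro (⟨hG', hH'⟩ | ⟨i, hi⟩ | ⟨i, hi⟩)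
  exacts [hne.elim (not_isEmpty_iff.mpr · hG') (not_isEmpty_iff.mpr · hH'),
    hi (hG i), hi (hH i)]

theorem not_rightWinsFirst_add {G H : PGame}
    (hne : Nonempty G.RightMoves ∨ Nonempty H.RightMoves)
    (hG : ∀ j, LeftWinsFirst (G.moveRight j + H)) (hH : ∀ j, LeftWinsFirst (G + H.moveRight j)) :
    ¬ RightWinsFirst (G + H) := by
  rw [rightWinsFirst_add_iff]
  rintro (⟨hG', hH'⟩ | ⟨j, hj⟩ | ⟨j, hj⟩)
  exacts [hne.elim (not_isEmpty_iff.mpr · hG') (not_isEmpty_iff.mpr · hH'),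
    hj (hG j), hj (hH j)]

theorem winsFirst_add_of_isEmpty {X : PGame} [IsEmpty X.LeftMoves] [IsEmpty X.RightMoves]
    (G : PGame) :
    (LeftWinsFirst (G + X) ↔ LeftWinsFirst G) ∧ (RightWinsFirst (G + X) ↔ RightWinsFirst G) := by
  induction G using PGame.moveRecOn with
  | IH G ihl ihr =>
    rw [leftWinsFirst_add_iff, leftWinsFirst_iff, rightWinsFirst_add_iff, rightWinsFirst_iff]
    simp [ihl, ihr, ‹IsEmpty X.LeftMoves›, ‹IsEmpty X.RightMoves›]

theorem winsFirst_isEmpty_add {X : PGame} [IsEmpty X.LeftMoves] [IsEmpty X.RightMoves]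
    (G : PGame) :
    (LeftWinsFirst (X + G) ↔ LeftWinsFirst G) ∧ (RightWinsFirst (X + G) ↔ RightWinsFirst G) := by
  induction G using PGame.moveRecOn with
  | IH G ihl ihr =>
    rw [leftWinsFirst_add_iff, leftWinsFirst_iff, rightWinsFirst_add_iff, rightWinsFirst_iff]
    simp [ihl, ihr, ‹IsEmpty X.LeftMoves›, ‹IsEmpty X.RightMoves›]

theorem outcome_le_iff {G H : PGame} : outcome G ≤ outcome H ↔
    (LeftWinsFirst G → LeftWinsFirst H) ∧ (RightWinsFirst H → RightWinsFirst G) := by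
  classical
  unfold outcome
  by_cases h1 : LeftWinsFirst G <;> by_cases h2 : RightWinsFirst G <;>
    by_cases h3 : LeftWinsFirst H <;> by_cases h4 : RightWinsFirst H <;>
    simp [h1, h2, h3, h4, LE.le]

theorem N_le_outcome_iff {G : PGame} : MOutcome.N ≤ outcome G ↔ LeftWinsFirst G := by
  classical
  unfold outcome
  by_cases h1 : LeftWinsFirst G <;> by_cases h2 : RightWinsFirst G <;> simp [h1, h2, LE.le]

theorem IsShort.moveLeft {G : PGame} (h : IsShort G) (i : G.LeftMoves) :
    IsShort (G.moveLeft i) := fun _ hG' => h _ (hG'.tail (.moveLeft i))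

theorem IsShort.moveRight {G : PGame} (h : IsShort G) (j : G.RightMoves) :
    IsShort (G.moveRight j) := fun _ hG' => h _ (hG'.tail (.moveRight j))

theorem Dicot.moveLeft {G : PGame} (h : Dicot G) (i : G.LeftMoves) :
    Dicot (G.moveLeft i) := fun _ hG' => h _ (hG'.tail (.moveLeft i))

theorem Dicot.moveRight {G : PGame} (h : Dicot G) (j : G.RightMoves) :
    Dicot (G.moveRight j) := fun _ hG' => h _ (hG'.tail (.moveRight j))

theorem Dicot.isEmpty_leftMoves_iff {G : PGame} (h : Dicot G) :
    IsEmpty G.LeftMoves ↔ IsEmpty G.RightMoves :=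
  h G .refl

theorem Dicot.nonempty_leftMoves_iff {G : PGame} (h : Dicot G) :
    Nonempty G.LeftMoves ↔ Nonempty G.RightMoves := by
  simpa only [not_isEmpty_iff] using h.isEmpty_leftMoves_iff.not

theorem Dicot.mk {α β : Type u} {L : α → PGame.{u}} {R : β → PGame.{u}}
    (h : IsEmpty α ↔ IsEmpty β) (hl : ∀ i, Dicot (L i)) (hr : ∀ j, Dicot (R j)) :
    Dicot (.mk α β L R) := by
  intro G' hG'
  rcases Relation.ReflTransGen.cases_tail hG' with rfl | ⟨c, hc, hopt⟩
  · exact h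
  · cases hopt with
    | moveLeft i => exact hl i G' hc
    | moveRight j => exact hr j G' hc

theorem IsShort.mk {α β : Type u} [Finite α] [Finite β] {L : α → PGame.{u}} {R : β → PGame.{u}}
    (hl : ∀ i, IsShort (L i)) (hr : ∀ j, IsShort (R j)) : IsShort (.mk α β L R) := by
  intro G' hG'
  rcases Relation.ReflTransGen.cases_tail hG' with rfl | ⟨c, hc, hopt⟩
  · exact ⟨‹_›, ‹_›⟩
  · cases hopt with
    | moveLeft i => exact hl i G' hc
    | moveRight j => exact hr j G' hc

theorem dicot_zero : Dicot 0 :=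
  .mk (iff_of_true inferInstance inferInstance) isEmptyElim isEmptyElim

theorem isShort_zero : IsShort 0 :=
  .mk isEmptyElim isEmptyElim

theorem dicot_star : Dicot star :=
  .mk Iff.rfl (fun _ => dicot_zero) (fun _ => dicot_zero)

theorem isShort_star : IsShort star :=
  .mk (fun _ => isShort_zero) (fun _ => isShort_zero)

theorem dge_zero_iff {G : PGame} : Dge G 0 ↔ ∀ X, IsShort X → Dicot X →
    (LeftWinsFirst X → LeftWinsFirst (G + X)) ∧ (RightWinsFirst (G + X) → RightWinsFirst X) := by
  refine forall_congr' fun X => forall_congr' fun _ => forall_congr' fun _ => ?_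
  rw [outcome_le_iff, (winsFirst_isEmpty_add (X := 0) X).1, (winsFirst_isEmpty_add (X := 0) X).2]

theorem leftWinsFirst_of_dge_zero {G : PGame} (h : Dge G 0) : LeftWinsFirst G :=
  (winsFirst_add_of_isEmpty G).1.mp
    ((dge_zero_iff.mp h 0 isShort_zero dicot_zero).1 leftWinsFirst_of_isEmpty)

theorem dge_zero_of_leftWinsFirst {G : PGame} (hG : LeftWinsFirst G)
    (hR : ∀ j, ∃ i, Dge ((G.moveRight j).moveLeft i) 0) : Dge G 0 := by
  rw [dge_zero_iff]
  intro X
  induction X using PGame.moveRecOn with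
  | IH X ihl ihr =>
    intro hs hd
    constructor
    · rintro hX
      rcases leftWinsFirst_iff.mp hX with hXL | ⟨i, hi⟩
      · have : IsEmpty X.RightMoves := hd.isEmpty_leftMoves_iff.mp hXL
        exact (winsFirst_add_of_isEmpty G).1.mpr hG
      · exact leftWinsFirst_add_of_moveLeft_right i
          fun h => hi ((ihl i (hs.moveLeft i) (hd.moveLeft i)).2 h)
    · intro hGX
      by_contra hX
      obtain ⟨hXR, hXRL⟩ := not_rightWinsFirst_iff.mp hX
      rcases rightWinsFirst_add_iff.mp hGX with ⟨-, hXR'⟩ | ⟨j, hj⟩ | ⟨j, hj⟩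
      · exact not_isEmpty_of_nonempty _ hXR'
      · obtain ⟨i, hi⟩ := hR j
        exact hj (leftWinsFirst_add_of_moveLeft_left i
          fun h => hX ((dge_zero_iff.mp hi X hs hd).2 h))
      · exact hj ((ihr j (hs.moveRight j) (hd.moveRight j)).1 (hXRL j))

theorem adjoint_of_isEmpty {G : PGame} (hl : IsEmpty G.LeftMoves) (hr : IsEmpty G.RightMoves) :
    adjoint G = star := by
  cases G
  rw [adjoint, if_pos ⟨hl, hr⟩]

theorem adjoint_of_nonempty {G : PGame} (hl : Nonempty G.LeftMoves) (hr : Nonempty G.RightMoves) :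
    adjoint G = PGame.mk G.RightMoves G.LeftMoves
      (fun j => adjoint (G.moveRight j)) (fun i => adjoint (G.moveLeft i)) := by
  obtain ⟨l, r, L, R⟩ := G
  have hl' : ¬ IsEmpty l := not_isEmpty_iff.mpr hl
  have hr' : ¬ IsEmpty r := not_isEmpty_iff.mpr hr
  rw [adjoint, if_neg fun h => hl' h.1, if_neg hl', if_neg hr']
  rfl

theorem Dicot.adjoint {G : PGame} (hd : Dicot G) : Dicot (adjoint G) := by
  induction G using PGame.moveRecOn with
  | IH G ihl ihr =>
    rcases isEmpty_or_nonempty G.LeftMoves with hl | hl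
    · rw [adjoint_of_isEmpty hl (hd.isEmpty_leftMoves_iff.mp hl)]
      exact dicot_star
    · have hr := hd.nonempty_leftMoves_iff.mp hl
      rw [adjoint_of_nonempty hl hr]
      exact .mk (iff_of_false (not_isEmpty_of_nonempty _) (not_isEmpty_of_nonempty _))
        (fun j => ihr j (hd.moveRight j)) (fun i => ihl i (hd.moveLeft i))

theorem IsShort.adjoint {G : PGame} (hs : IsShort G) (hd : Dicot G) : IsShort (adjoint G) := by
  induction G using PGame.moveRecOn with
  | IH G ihl ihr =>
    rcases isEmpty_or_nonempty G.LeftMoves with hl | hl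
    · rw [adjoint_of_isEmpty hl (hd.isEmpty_leftMoves_iff.mp hl)]
      exact isShort_star
    · rw [adjoint_of_nonempty hl (hd.nonempty_leftMoves_iff.mp hl)]
      have := (hs G .refl).1
      have := (hs G .refl).2
      exact .mk (fun j => ihr j (hs.moveRight j) (hd.moveRight j))
        (fun i => ihl i (hs.moveLeft i) (hd.moveLeft i))

theorem winsFirst_add_adjoint {G : PGame} (hd : Dicot G) :
    ¬ LeftWinsFirst (G + adjoint G) ∧ ¬ RightWinsFirst (G + adjoint G) := by
  induction G using PGame.moveRecOn with
  | IH G ihl ihr =>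
    rcases isEmpty_or_nonempty G.LeftMoves with hl | hl
    · have hr := hd.isEmpty_leftMoves_iff.mp hl
      rw [adjoint_of_isEmpty hl hr]
      refine ⟨not_leftWinsFirst_add (Or.inr inferInstance) isEmptyElim fun _ => ?_,
        not_rightWinsFirst_add (Or.inr inferInstance) isEmptyElim fun _ => ?_⟩
      · exact (winsFirst_add_of_isEmpty (X := 0) G).2.mpr rightWinsFirst_of_isEmpty
      · exact (winsFirst_add_of_isEmpty (X := 0) G).1.mpr leftWinsFirst_of_isEmpty
    · have hr := hd.nonempty_leftMoves_iff.mp hl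
      rw [adjoint_of_nonempty hl hr]
      exact ⟨not_leftWinsFirst_add (Or.inl hl)
          (fun i => rightWinsFirst_add_of_moveRight_right (G := G.moveLeft i) i
            (ihl i (hd.moveLeft i)).1)
          (fun j => rightWinsFirst_add_of_moveRight_left (H := adjoint (G.moveRight j)) j
            (ihr j (hd.moveRight j)).1),
        not_rightWinsFirst_add (Or.inl hr)
          (fun j => leftWinsFirst_add_of_moveLeft_right (G := G.moveRight j) j
            (ihr j (hd.moveRight j)).2)
          (fun i => leftWinsFirst_add_of_moveLeft_left (H := adjoint (G.moveLeft i)) i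
            (ihl i (hd.moveLeft i)).2)⟩

theorem not_rightWinsFirst_star : ¬ RightWinsFirst star :=
  not_rightWinsFirst_iff.mpr ⟨inferInstance, fun _ => leftWinsFirst_of_isEmpty (G := 0)⟩

structure IsLeftWitness (D X : PGame) : Prop where
  isShort : IsShort X
  dicot : Dicot X
  leftWinsFirst : LeftWinsFirst X
  not_leftWinsFirst_add : ¬ LeftWinsFirst (D + X)

/-- Right, moving from `G` to its option `C`, wins `G + T` although Right loses `T` moving first;
so no `G` with right option `C` is `≽ 0`. -/
structure IsRightWitness (C T : PGame) : Prop where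
  isShort : IsShort T
  dicot : Dicot T
  not_rightWinsFirst : ¬ RightWinsFirst T
  not_leftWinsFirst_add : ¬ LeftWinsFirst (C + T)

theorem isLeftWitness_zero {D : PGame} (h : ¬ LeftWinsFirst D) : IsLeftWitness D 0 :=
  ⟨isShort_zero, dicot_zero, leftWinsFirst_of_isEmpty,
    fun h' => h ((winsFirst_add_of_isEmpty D).1.mp h')⟩

theorem IsRightWitness.not_dge_zero {G T : PGame} {j : G.RightMoves}
    (h : IsRightWitness (G.moveRight j) T) : ¬ Dge G 0 := fun hG =>
  h.not_rightWinsFirst ((dge_zero_iff.mp hG T h.isShort h.dicot).2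
    (rightWinsFirst_add_of_moveRight_left j h.not_leftWinsFirst_add))

theorem exists_isRightWitness {C : PGame} (hs : IsShort C) (hd : Dicot C)
    (hX : ∀ i, ∃ X, IsLeftWitness (C.moveLeft i) X) : ∃ T, IsRightWitness C T := by
  rcases isEmpty_or_nonempty C.LeftMoves with hl | hl
  · refine ⟨adjoint C, hs.adjoint hd, hd.adjoint, ?_, (winsFirst_add_adjoint hd).1⟩
    rw [adjoint_of_isEmpty hl (hd.isEmpty_leftMoves_iff.mp hl)]
    exact not_rightWinsFirst_star
  · choose X hX using hX
    have hr := hd.nonempty_leftMoves_iff.mp hl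
    have := (hs C .refl).1
    have := (hs C .refl).2
    refine ⟨.mk C.RightMoves C.LeftMoves (fun j => adjoint (C.moveRight j)) X,
      .mk (fun j => (hs.moveRight j).adjoint (hd.moveRight j)) (fun i => (hX i).isShort),
      .mk (iff_of_false (not_isEmpty_iff.mpr hr) (not_isEmpty_iff.mpr hl))
        (fun j => (hd.moveRight j).adjoint) (fun i => (hX i).dicot),
      not_rightWinsFirst_iff.mpr ⟨hl, fun i => (hX i).leftWinsFirst⟩, ?_⟩
    exact not_leftWinsFirst_add (Or.inl hl)
      (fun i => rightWinsFirst_add_of_moveRight_right (G := C.moveLeft i) i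
        (hX i).not_leftWinsFirst_add)
      (fun j => rightWinsFirst_add_of_moveRight_left (H := adjoint (C.moveRight j)) j
        (winsFirst_add_adjoint (hd.moveRight j)).1)

theorem exists_isLeftWitness {D T : PGame} (hs : IsShort D) (hd : Dicot D) {j : D.RightMoves}
    (hT : IsRightWitness (D.moveRight j) T) : ∃ X, IsLeftWitness D X := by
  have hl := hd.nonempty_leftMoves_iff.mpr ⟨j⟩
  have := (hs D .refl).1
  refine ⟨.mk PUnit D.LeftMoves (fun _ => T) (fun i => adjoint (D.moveLeft i)),
    .mk (fun _ => hT.isShort) (fun i => (hs.moveLeft i).adjoint (hd.moveLeft i)),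
    .mk (iff_of_false (not_isEmpty_of_nonempty _) (not_isEmpty_iff.mpr hl))
      (fun _ => hT.dicot) (fun i => (hd.moveLeft i).adjoint),
    leftWinsFirst_iff.mpr (Or.inr ⟨PUnit.unit, hT.not_rightWinsFirst⟩), ?_⟩
  exact not_leftWinsFirst_add (Or.inl hl)
    (fun i => rightWinsFirst_add_of_moveRight_right (G := D.moveLeft i) i
      (winsFirst_add_adjoint (hd.moveLeft i)).1)
    (fun _ => rightWinsFirst_add_of_moveRight_left j hT.not_leftWinsFirst_add)

theorem exists_witnesses {G : PGame} (hs : IsShort G) (hd : Dicot G) :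
    ((∀ i, ¬ Dge (G.moveLeft i) 0) → ∃ T, IsRightWitness G T) ∧
      (¬ Dge G 0 → ∃ X, IsLeftWitness G X) := by
  induction G using PGame.moveRecOn with
  | IH G ihl ihr =>
    refine ⟨fun h => exists_isRightWitness hs hd fun i =>
      (ihl i (hs.moveLeft i) (hd.moveLeft i)).2 (h i), fun h => ?_⟩
    by_cases hG : LeftWinsFirst G
    · obtain ⟨j, hj⟩ : ∃ j, ∀ i, ¬ Dge ((G.moveRight j).moveLeft i) 0 := by
        by_contra! hR
        exact h (dge_zero_of_leftWinsFirst hG hR)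
      obtain ⟨T, hT⟩ := (ihr j (hs.moveRight j) (hd.moveRight j)).1 hj
      exact exists_isLeftWitness hs hd hT
    · exact ⟨0, isLeftWitness_zero hG⟩

/-- `G ≽ 0` (mod `D⁻`) iff `o(G) ≥ N` and every right option of `G`
has a left option `≽ 0`. -/
theorem stmt6 (G : PGame) (hs : IsShort G) (hd : Dicot G) :
    Dge G 0 ↔ (MOutcome.N ≤ outcome G) ∧
      ∀ j : G.RightMoves, ∃ i : (G.moveRight j).LeftMoves,
        Dge ((G.moveRight j).moveLeft i) 0 := by
  rw [N_le_outcome_iff]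
  refine ⟨fun h => ⟨leftWinsFirst_of_dge_zero h, fun j => ?_⟩,
    fun h => dge_zero_of_leftWinsFirst h.1 h.2⟩
  by_contra! hj
  obtain ⟨T, hT⟩ := (exists_witnesses (hs.moveRight j) (hd.moveRight j)).1 hj
  exact hT.not_dge_zero h

end MisereDicot
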